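/- For every positive integer n, N ≥ 1, and partitions S₁,S₂,S₃ of n: (1/n!³) Σ_{σ₁,σ₂,σ₃∈Sₙ} χ^{S₁}(σ₁)χ^{S₂}(σ₂)χ^{S₃}(σ₃) Σ_{γ∈Sₙ} N^{c(γσ₁)+c(γσ₂)+c(γσ₃)} = n! · (Dim_N(S₁)/d(S₁)) (Dim_N(S₂)/d(S₂)) (Dim_N(S₃)/d(S₃)) · C(S₁,S₂,S₃). -/

import Mathlib

/-!
For a class function `f` on a finite group, `∑ x, f x • ρ x` commutes with the action, so by
Schur's lemma it acts on an irreducible `W` as the scalar `(∑ x, χ_W(x) f(x)) / dim W`. Taking the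
trace against `ρ γ⁻¹` turns the twisted sum `∑ x, χ_W(x) f(γ x)` into that scalar times `χ_W(γ⁻¹)`.
With `f = N ^ c(·)`, which is a class function because `c` only depends on the cycle type, the
left-hand side factors over `γ` into three such twisted sums, and the remaining sum
`∑ γ, χ₁(γ⁻¹) χ₂(γ⁻¹) χ₃(γ⁻¹)` is `n!` times the Kronecker coefficient.
-/

open CategoryTheory

/-- The number of cycles of `σ ∈ Sₙ`, counting fixed points as cycles of length 1. -/
def numCycles {n : ℕ} (σ : Equiv.Perm (Fin n)) : ℕ :=
  Multiset.card σ.cycleType + (n - σ.cycleType.sum)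

/-- `Dim_N(R) = (1/n!) ∑_α χ^R(α) N^{c(α)}`. -/
noncomputable def dimN {n : ℕ} (V : n.Partition → FDRep ℂ (Equiv.Perm (Fin n)))
    (N : ℕ) (R : n.Partition) : ℂ :=
  (Nat.factorial n : ℂ)⁻¹ *
    ∑ α : Equiv.Perm (Fin n), (V R).character α * (N : ℂ) ^ numCycles α

/-- The Kronecker coefficient `C(S₁,S₂,S₃)`. -/
noncomputable def kron {n : ℕ} (V : n.Partition → FDRep ℂ (Equiv.Perm (Fin n)))
    (S₁ S₂ S₃ : n.Partition) : ℂ :=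
  (Nat.factorial n : ℂ)⁻¹ *
    ∑ σ : Equiv.Perm (Fin n),
      (V S₁).character σ * (V S₂).character σ * (V S₃).character σ

theorem numCycles_conj {n : ℕ} (g σ : Equiv.Perm (Fin n)) :
    numCycles (g * σ * g⁻¹) = numCycles σ := by
  rw [numCycles, numCycles, Equiv.Perm.cycleType_conj]

namespace FDRep

universe u

variable {k G : Type u} [Field k] [Group G]

theorem finrank_ne_zero_of_simple (W : FDRep k G) [Simple W] : Module.finrank k W ≠ 0 := by
  intro h
  have : Subsingleton W := Module.finrank_zero_iff.mp h
  exact id_nonzero W (Action.Hom.ext (FGModuleCat.hom_ext (Subsingleton.elim _ _)))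

variable [Fintype G] [IsAlgClosed k] [CharZero k]

theorem sum_smul_ρ_eq_smul_one (W : FDRep k G) [Simple W] (f : G → k)
    (hf : ∀ g x, f (g * x * g⁻¹) = f x) :
    ∑ x, f x • W.ρ x = ((∑ x, W.character x * f x) / Module.finrank k W) • 1 := by
  set A := ∑ x, f x • W.ρ x
  have hcomm : ∀ g, A * W.ρ g = W.ρ g * A := fun g => by
    simp only [A, Finset.sum_mul, Finset.mul_sum, smul_mul_assoc, mul_smul_comm, ← map_mul]
    refine Fintype.sum_equiv (MulAut.conj g⁻¹).toEquiv _ _ fun x => ?_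
    have hx : f (g⁻¹ * x * g) = f x := by simpa only [inv_inv] using hf g⁻¹ x
    simp only [MulEquiv.toEquiv_eq_coe, EquivLike.coe_coe, MulAut.conj_apply, inv_inv, hx,
      ← mul_assoc, mul_inv_cancel, one_mul]
  obtain ⟨c, hc⟩ := endomorphism_simple_eq_smul_id k (show W ⟶ W from
    ⟨FGModuleCat.ofHom A, fun g =>
      FGModuleCat.hom_ext (LinearMap.ext (LinearMap.congr_fun (hcomm g)))⟩)
  have hA : A = c • 1 := (congrArg (fun φ => φ.hom.hom.hom) hc).symm
  have htrace : ∑ x, W.character x * f x = c * Module.finrank k W := calc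
    _ = LinearMap.trace k W A := by
      simp only [A, map_sum, map_smul, character, smul_eq_mul, mul_comm]
    _ = c * Module.finrank k W := by rw [hA, map_smul, LinearMap.trace_one, smul_eq_mul]
  rw [hA, htrace, mul_div_cancel_right₀ _ (Nat.cast_ne_zero.mpr (finrank_ne_zero_of_simple W))]

theorem sum_character_mul_apply_mul (W : FDRep k G) [Simple W] (f : G → k)
    (hf : ∀ g x, f (g * x * g⁻¹) = f x) (γ : G) :
    ∑ x, W.character x * f (γ * x) =
      (∑ x, W.character x * f x) / Module.finrank k W * W.character γ⁻¹ := calc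
  _ = ∑ x, W.character (γ⁻¹ * x) * f x :=
      Fintype.sum_equiv (Equiv.mulLeft γ) _ _ fun x => by simp
  _ = LinearMap.trace k W (W.ρ γ⁻¹ * ∑ x, f x • W.ρ x) := by
      simp only [Finset.mul_sum, mul_smul_comm, map_sum, map_smul, character, map_mul,
        smul_eq_mul, mul_comm]
  _ = _ := by
      rw [sum_smul_ρ_eq_smul_one W f hf, mul_smul_comm, map_smul, mul_one, smul_eq_mul]
      rfl

theorem sum_characters_mul_sum_apply_mul (W₁ W₂ W₃ : FDRep k G)
    [Simple W₁] [Simple W₂] [Simple W₃] (f : G → k) (hf : ∀ g x, f (g * x * g⁻¹) = f x) :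
    ∑ x₁, ∑ x₂, ∑ x₃, W₁.character x₁ * W₂.character x₂ * W₃.character x₃ *
        ∑ γ, f (γ * x₁) * f (γ * x₂) * f (γ * x₃) =
      (∑ x, W₁.character x * f x) / Module.finrank k W₁ *
        ((∑ x, W₂.character x * f x) / Module.finrank k W₂) *
        ((∑ x, W₃.character x * f x) / Module.finrank k W₃) *
        ∑ γ, W₁.character γ * W₂.character γ * W₃.character γ := calc
  _ = ∑ x₁, ∑ x₂, ∑ x₃, ∑ γ, W₁.character x₁ * f (γ * x₁) * (W₂.character x₂ * f (γ * x₂)) *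
        (W₃.character x₃ * f (γ * x₃)) := by
      simp only [Finset.mul_sum]
      refine Finset.sum_congr rfl fun x₁ _ => Finset.sum_congr rfl fun x₂ _ =>
        Finset.sum_congr rfl fun x₃ _ => Finset.sum_congr rfl fun γ _ => by ring
  _ = ∑ γ, ∑ x₁, ∑ x₂, ∑ x₃, W₁.character x₁ * f (γ * x₁) * (W₂.character x₂ * f (γ * x₂)) *
        (W₃.character x₃ * f (γ * x₃)) :=
      (Finset.sum_congr rfl fun _ _ =>
        (Finset.sum_congr rfl fun _ _ => Finset.sum_comm).trans Finset.sum_comm).trans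
        Finset.sum_comm
  _ = ∑ γ, (∑ x, W₁.character x * f (γ * x)) * (∑ x, W₂.character x * f (γ * x)) *
        (∑ x, W₃.character x * f (γ * x)) := by
      simp only [← Finset.mul_sum, ← Finset.sum_mul]
  _ = _ := by
      simp only [sum_character_mul_apply_mul _ f hf, Finset.mul_sum]
      refine Fintype.sum_equiv (Equiv.inv G) _ _ fun γ => ?_
      simp only [Equiv.inv_apply]
      ring

end FDRep

theorem central_correlator_general (n : ℕ) (N : ℕ)
    (V : n.Partition → FDRep ℂ (Equiv.Perm (Fin n)))
    (hirr : ∀ R, Simple (V R))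
    (S₁ S₂ S₃ : n.Partition) :
    ((Nat.factorial n : ℂ)⁻¹) ^ 3 *
        (∑ σ₁ : Equiv.Perm (Fin n), ∑ σ₂ : Equiv.Perm (Fin n), ∑ σ₃ : Equiv.Perm (Fin n),
          (V S₁).character σ₁ * (V S₂).character σ₂ * (V S₃).character σ₃ *
            ∑ γ : Equiv.Perm (Fin n),
              (N : ℂ) ^ (numCycles (γ * σ₁) + numCycles (γ * σ₂) + numCycles (γ * σ₃))) =
      (Nat.factorial n : ℂ) *
        (dimN V N S₁ / (Module.finrank ℂ (V S₁) : ℂ)) *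
        (dimN V N S₂ / (Module.finrank ℂ (V S₂) : ℂ)) *
        (dimN V N S₃ / (Module.finrank ℂ (V S₃) : ℂ)) *
        kron V S₁ S₂ S₃ := by
  have := hirr S₁; have := hirr S₂; have := hirr S₃
  have hclass : ∀ g σ : Equiv.Perm (Fin n),
      (N : ℂ) ^ numCycles (g * σ * g⁻¹) = (N : ℂ) ^ numCycles σ := by
    simp only [numCycles_conj, implies_true]
  have hsum := FDRep.sum_characters_mul_sum_apply_mul (V S₁) (V S₂) (V S₃)
    (fun σ => (N : ℂ) ^ numCycles σ) hclass
  simp only [← pow_add] at hsum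
  rw [hsum, dimN, dimN, dimN, kron]
  field_simp

/-- `(1/n!³) ∑_{σ₁,σ₂,σ₃} χ^{S₁}(σ₁)χ^{S₂}(σ₂)χ^{S₃}(σ₃) ∑_γ N^{c(γσ₁)+c(γσ₂)+c(γσ₃)}
  = n!·(Dim_N(S₁)/d(S₁))(Dim_N(S₂)/d(S₂))(Dim_N(S₃)/d(S₃))·C(S₁,S₂,S₃)`,
where the irreducible representations of `Sₙ` are labelled by the partitions of `n`
(a complete family `V` of pairwise non-isomorphic simple representations), and
`d(S) = dim V_S`. -/
theorem central_correlator (n : ℕ) (hn : 0 < n) (N : ℕ) (hN : 1 ≤ N)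
    (V : n.Partition → FDRep ℂ (Equiv.Perm (Fin n)))
    (hirr : ∀ R, Simple (V R))
    (hdist : ∀ R S : n.Partition, R ≠ S → IsEmpty (V R ≅ V S))
    (hcomplete : ∀ W : FDRep ℂ (Equiv.Perm (Fin n)), Simple W → ∃ R, Nonempty (W ≅ V R))
    (S₁ S₂ S₃ : n.Partition) :
    ((Nat.factorial n : ℂ)⁻¹) ^ 3 *
        (∑ σ₁ : Equiv.Perm (Fin n), ∑ σ₂ : Equiv.Perm (Fin n), ∑ σ₃ : Equiv.Perm (Fin n),
          (V S₁).character σ₁ * (V S₂).character σ₂ * (V S₃).character σ₃ *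
            ∑ γ : Equiv.Perm (Fin n),
              (N : ℂ) ^ (numCycles (γ * σ₁) + numCycles (γ * σ₂) + numCycles (γ * σ₃))) =
      (Nat.factorial n : ℂ) *
        (dimN V N S₁ / (Module.finrank ℂ (V S₁) : ℂ)) *
        (dimN V N S₂ / (Module.finrank ℂ (V S₂) : ℂ)) *
        (dimN V N S₃ / (Module.finrank ℂ (V S₃) : ℂ)) *
        kron V S₁ S₂ S₃ :=
  central_correlator_general n N V hirr S₁ S₂ S₃
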